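/- arXiv:1301.2567 — 3 statements merged into one kernel-verified Lean document; each statement's English description precedes it below -/
import Mathlib

section
/- Let A ∈ ℂ^{n×p}, B ∈ ℂ^{m×q}, C ∈ ℂ^{n×q}, Hermitian D ∈ ℂ^{n×n} and Hermitian M ∈ ℂ^{q×q} be given with A ≠ 0 and BMB* ≠ 0, and let φ(X) = (AXB + C)M(AXB + C)* + D for X ∈ ℂ^{p×m}. Then φ(X) ⪰ 0 for all X ∈ ℂ^{p×m} if and only if N3 ⪰ 0; dually, φ(X) ⪯ 0 for all X ∈ ℂ^{p×m} if and only if N3 ⪯ 0. -/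
/-!
With `T = [1 | A X]` one has `φ(X) = T N₃ Tᴴ`, so `N₃ ⪰ 0` forces `φ(X) ⪰ 0`. Conversely, the
quadratic form of `φ(X)` at `u` is that of `N₃` at `(u, Xᴴ Aᴴ u)`. When `Aᴴ u ≠ 0` a rank-one `X`
makes the second component arbitrary, so the form of `N₃` is nonnegative on the set of `(u, v)`
with `Aᴴ u ≠ 0`; this set is the complement of a proper subspace (as `A ≠ 0`), hence dense, and
continuity gives nonnegativity everywhere. The case `⪯ 0` is the case `⪰ 0` for `(-D, -M)`.
-/

open Matrix
open scoped ComplexOrder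

theorem LinearMap.dense_setOf_ne_zero {𝕜 E F : Type*} [NontriviallyNormedField 𝕜]
    [AddCommGroup E] [TopologicalSpace E] [ContinuousAdd E] [Module 𝕜 E] [ContinuousSMul 𝕜 E]
    [AddCommGroup F] [Module 𝕜 F] {L : E →ₗ[𝕜] F} (hL : L ≠ 0) : Dense {x | L x ≠ 0} := by
  have : interior (LinearMap.ker L : Set E) = ∅ := by
    by_contra h
    exact hL (LinearMap.ker_eq_top.mp
      ((LinearMap.ker L).eq_top_of_nonempty_interior' (Set.nonempty_iff_ne_empty.mpr h)))
  exact interior_eq_empty_iff_dense_compl.mp this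

namespace Matrix

theorem exists_mulVec_eq_of_ne_zero {K : Type*} [Field K] {m n : Type*} [Fintype n]
    {w : n → K} (hw : w ≠ 0) (v : m → K) : ∃ Y : Matrix m n K, Y *ᵥ w = v := by
  classical
  obtain ⟨i, hi⟩ := Function.ne_iff.mp hw
  refine ⟨vecMulVec v (Pi.single i (w i)⁻¹), ?_⟩
  rw [vecMulVec_mulVec, single_dotProduct, inv_mul_cancel₀ hi, MulOpposite.op_one, one_smul]

theorem dotProduct_mul_mul_conjTranspose_mulVec {R : Type*} [CommRing R] [StarRing R]
    {n m : Type*} [Fintype n] [Fintype m] (T : Matrix n m R) (N : Matrix m m R) (u : n → R) :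
    star u ⬝ᵥ (T * N * Tᴴ) *ᵥ u = star (Tᴴ *ᵥ u) ⬝ᵥ N *ᵥ (Tᴴ *ᵥ u) := by
  simp [star_mulVec, dotProduct_mulVec, vecMul_vecMul, Matrix.mul_assoc]

section phiBlock

variable {R : Type*} [CommRing R] [StarRing R] {n m q : Type*} [Fintype q]

/-- The matrix `N₃`. -/
def phiBlock (B : Matrix m q R) (C : Matrix n q R) (D : Matrix n n R) (M : Matrix q q R) :
    Matrix (n ⊕ m) (n ⊕ m) R :=
  fromBlocks (D + C * M * Cᴴ) (C * M * Bᴴ) (B * M * Cᴴ) (B * M * Bᴴ)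

theorem fromCols_one_mul_phiBlock_mul_conjTranspose [Fintype n] [Fintype m] [DecidableEq n]
    (B : Matrix m q R) (C : Matrix n q R) (D : Matrix n n R) (M : Matrix q q R)
    (K : Matrix n m R) :
    fromCols (1 : Matrix n n R) K * phiBlock B C D M * (fromCols (1 : Matrix n n R) K)ᴴ
      = (K * B + C) * M * (K * B + C)ᴴ + D := by
  rw [phiBlock, conjTranspose_fromCols_eq_fromRows_conjTranspose, fromCols_mul_fromBlocks,
    fromCols_mul_fromRows]
  simp only [conjTranspose_add, conjTranspose_mul, conjTranspose_one, Matrix.one_mul,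
    Matrix.mul_one, Matrix.add_mul, Matrix.mul_add, Matrix.mul_assoc]
  abel

theorem IsHermitian.phiBlock {B : Matrix m q R} {C : Matrix n q R} {D : Matrix n n R}
    {M : Matrix q q R} (hD : D.IsHermitian) (hM : M.IsHermitian) :
    (phiBlock B C D M).IsHermitian :=
  .fromBlocks (hD.add (isHermitian_mul_mul_conjTranspose C hM))
    (by simp [conjTranspose_mul, hM.eq, Matrix.mul_assoc])
    (isHermitian_mul_mul_conjTranspose B hM)

theorem phiBlock_neg (B : Matrix m q R) (C : Matrix n q R) (D : Matrix n n R)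
    (M : Matrix q q R) :
    phiBlock B C (-D) (-M) = -phiBlock B C D M := by
  simp only [phiBlock, fromBlocks_neg, Matrix.mul_neg, Matrix.neg_mul, neg_add]

end phiBlock

theorem forall_posSemidef_iff_posSemidef_phiBlock {n m p q : Type*} [Fintype n] [Fintype m]
    [Fintype p] [Fintype q] [DecidableEq n] {A : Matrix n p ℂ} (B : Matrix m q ℂ) (C : Matrix n q ℂ)
    {D : Matrix n n ℂ} {M : Matrix q q ℂ} (hD : D.IsHermitian) (hM : M.IsHermitian) (hA : A ≠ 0) :
    (∀ X : Matrix p m ℂ, ((A * X * B + C) * M * (A * X * B + C)ᴴ + D).PosSemidef) ↔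
      (phiBlock B C D M).PosSemidef := by
  refine ⟨fun hφ => .of_dotProduct_mulVec_nonneg (.phiBlock hD hM) fun x => ?_, fun hN X => ?_⟩
  · set L : (n ⊕ m → ℂ) →ₗ[ℂ] (p → ℂ) := Aᴴ.mulVecLin ∘ₗ LinearMap.funLeft ℂ ℂ Sum.inl
    have hL : L ≠ 0 := by
      obtain ⟨u, hu⟩ : ∃ u, Aᴴ *ᵥ u ≠ 0 := by
        by_contra! h
        exact hA <| conjTranspose_eq_zero.mp <|
          ext_of_mulVec_single fun i => by rw [h, zero_mulVec]
      exact DFunLike.ne_iff.mpr ⟨Sum.elim u 0, hu⟩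
    refine (LinearMap.dense_setOf_ne_zero hL).induction (fun x hx => ?_) ?_ x
    · obtain ⟨Y, hY⟩ := exists_mulVec_eq_of_ne_zero (w := Aᴴ *ᵥ (x ∘ Sum.inl)) hx (x ∘ Sum.inr)
      have hT : (fromCols (1 : Matrix n n ℂ) (A * Yᴴ))ᴴ *ᵥ (x ∘ Sum.inl) = x := by
        rw [conjTranspose_fromCols_eq_fromRows_conjTranspose, fromRows_mulVec, conjTranspose_one,
          one_mulVec, conjTranspose_mul, conjTranspose_conjTranspose, ← mulVec_mulVec, hY,
          Sum.elim_comp_inl_inr]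
      have h := (hφ Yᴴ).dotProduct_mulVec_nonneg (x ∘ Sum.inl)
      rwa [← fromCols_one_mul_phiBlock_mul_conjTranspose, dotProduct_mul_mul_conjTranspose_mulVec,
        hT] at h
    · exact isClosed_le continuous_const (by fun_prop)
  · rw [← fromCols_one_mul_phiBlock_mul_conjTranspose B C D M (A * X)]
    exact hN.mul_mul_conjTranspose_same _

end Matrix

theorem stmt8_general {n m p q : ℕ}
    (A : Matrix (Fin n) (Fin p) ℂ) (B : Matrix (Fin m) (Fin q) ℂ)
    (C : Matrix (Fin n) (Fin q) ℂ) (D : Matrix (Fin n) (Fin n) ℂ)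
    (M : Matrix (Fin q) (Fin q) ℂ)
    (hD : D.IsHermitian) (hM : M.IsHermitian)
    (hA : A ≠ 0) :
    ((∀ X : Matrix (Fin p) (Fin m) ℂ,
        ((A * X * B + C) * M * (A * X * B + C)ᴴ + D).PosSemidef) ↔
      (fromBlocks (D + C * M * Cᴴ) (C * M * Bᴴ) (B * M * Cᴴ) (B * M * Bᴴ)).PosSemidef) ∧
    ((∀ X : Matrix (Fin p) (Fin m) ℂ,
        (-((A * X * B + C) * M * (A * X * B + C)ᴴ + D)).PosSemidef) ↔
      (-(fromBlocks (D + C * M * Cᴴ) (C * M * Bᴴ) (B * M * Cᴴ) (B * M * Bᴴ))).PosSemidef) := by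
  have phi_neg (X : Matrix (Fin p) (Fin m) ℂ) :
      (A * X * B + C) * -M * (A * X * B + C)ᴴ + -D
        = -((A * X * B + C) * M * (A * X * B + C)ᴴ + D) := by
    simp only [Matrix.mul_neg, Matrix.neg_mul, neg_add]
  have h_neg := forall_posSemidef_iff_posSemidef_phiBlock B C hD.neg hM.neg hA
  simp only [phi_neg, phiBlock_neg] at h_neg
  exact ⟨forall_posSemidef_iff_posSemidef_phiBlock B C hD hM hA, h_neg⟩

theorem stmt8 {n m p q : ℕ}
    (A : Matrix (Fin n) (Fin p) ℂ) (B : Matrix (Fin m) (Fin q) ℂ)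
    (C : Matrix (Fin n) (Fin q) ℂ) (D : Matrix (Fin n) (Fin n) ℂ)
    (M : Matrix (Fin q) (Fin q) ℂ)
    (hD : D.IsHermitian) (hM : M.IsHermitian)
    (hA : A ≠ 0) (hBMB : B * M * Bᴴ ≠ 0) :
    ((∀ X : Matrix (Fin p) (Fin m) ℂ,
        ((A * X * B + C) * M * (A * X * B + C)ᴴ + D).PosSemidef) ↔
      (fromBlocks (D + C * M * Cᴴ) (C * M * Bᴴ) (B * M * Cᴴ) (B * M * Bᴴ)).PosSemidef) ∧
    ((∀ X : Matrix (Fin p) (Fin m) ℂ,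
        (-((A * X * B + C) * M * (A * X * B + C)ᴴ + D)).PosSemidef) ↔
      (-(fromBlocks (D + C * M * Cᴴ) (C * M * Bᴴ) (B * M * Cᴴ) (B * M * Bᴴ))).PosSemidef) :=
  stmt8_general A B C D M hD hM hA
end

section
/- Let A ∈ ℂ^{n×p}, B ∈ ℂ^{m×q}, C ∈ ℂ^{n×q}, Hermitian D ∈ ℂ^{n×n} and Hermitian M ∈ ℂ^{q×q} be given with A ≠ 0, and let φ(X) = (AXB + C)M(AXB + C)* + D for X ∈ ℂ^{p×m}. Assume BMB* ⪰ 0, ℛ(CMB*) ⊆ ℛ(A), and ℛ(BMC*) ⊆ ℛ(BMB*). Then a matrix X̂ ∈ ℂ^{p×m} satisfies φ(X) ⪰ φ(X̂) for all X ∈ ℂ^{p×m} if and only if X̂ solves the linear matrix equation A X̂ BMB* + CMB* = 0. -/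
/-!
Write `N = BMB*`, `G = AX̂N + CMB*` and `Δ = X - X̂`. Expanding, and using `M = M*`,
`φ(X) - φ(X̂) = (AΔ)N(AΔ)* + (AΔ)G* + G(AΔ)*`, so `G = 0` makes the difference `⪰ 0` as `N ⪰ 0`.
Conversely `ℛ(G) ⊆ ℛ(A)`, so `G = AH`, and `X = X̂ - tH` gives `t²GNG* - 2tGG* ⪰ 0` for all
`t > 0`; taking traces and letting `t → 0` yields `tr(GG*) = 0`, i.e. `G = 0`.
-/

open Matrix Filter Topology
open scoped ComplexOrder

lemma nonpos_of_forall_pos_le_mul {a b : ℝ} (h : ∀ t > 0, a ≤ t * b) : a ≤ 0 := by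
  have hlim : Tendsto (fun t : ℝ => t * b) (𝓝 0) (𝓝 (0 * b)) := (continuous_mul_const b).tendsto 0
  rw [zero_mul] at hlim
  exact ge_of_tendsto (hlim.mono_left nhdsWithin_le_nhds)
    (eventually_nhdsWithin_of_forall (s := Set.Ioi 0) h)

namespace Matrix

variable {l m n o : Type*} [Fintype m] [Fintype n]

theorem exists_mul_eq_of_range_le {R : Type*} [CommRing R] [DecidableEq m]
    {A : Matrix l n R} {G : Matrix l m R}
    (h : LinearMap.range G.mulVecLin ≤ LinearMap.range A.mulVecLin) :
    ∃ H : Matrix n m R, A * H = G := by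
  choose v hv using fun j : m => h ⟨Pi.single j 1, rfl⟩
  simp only [mulVecLin_apply, mulVec_single_one] at hv
  refine ⟨(Matrix.of v)ᵀ, ?_⟩
  ext i j
  simpa [Matrix.mul_apply, mulVec, dotProduct] using congr_fun (hv j) i

theorem range_mulVecLin_mul_add_le {R : Type*} [CommRing R] {A : Matrix l n R}
    {Y : Matrix n m R} {C : Matrix l m R}
    (h : LinearMap.range C.mulVecLin ≤ LinearMap.range A.mulVecLin) :
    LinearMap.range (A * Y + C).mulVecLin ≤ LinearMap.range A.mulVecLin := by
  rw [mulVecLin_add, mulVecLin_mul]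
  exact (LinearMap.range_add_le _ _).trans (sup_le (LinearMap.range_comp_le_range _ _) h)

theorem sandwich_sub_sandwich {R : Type*} [CommRing R] [StarRing R] [Fintype o]
    {A : Matrix l n R} {B : Matrix m o R} {C : Matrix l o R} {M : Matrix o o R}
    (hM : M.IsHermitian) (X Y : Matrix n m R) :
    (A * X * B + C) * M * (A * X * B + C)ᴴ - (A * Y * B + C) * M * (A * Y * B + C)ᴴ =
      A * (X - Y) * (B * M * Bᴴ) * (A * (X - Y))ᴴ
        + A * (X - Y) * (A * Y * (B * M * Bᴴ) + C * M * Bᴴ)ᴴ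
        + (A * Y * (B * M * Bᴴ) + C * M * Bᴴ) * (A * (X - Y))ᴴ := by
  simp only [Matrix.mul_sub, Matrix.sub_mul, Matrix.mul_add, Matrix.add_mul,
    conjTranspose_add, conjTranspose_sub, conjTranspose_mul, conjTranspose_conjTranspose, hM.eq,
    Matrix.mul_assoc]
  abel

variable {𝕜 : Type*} [RCLike 𝕜]

theorem neg_smul_sandwich (t : ℝ) (G : Matrix l m 𝕜) (N : Matrix m m 𝕜) :
    -(t • G) * N * (-(t • G))ᴴ + -(t • G) * Gᴴ + G * (-(t • G))ᴴ =
      t ^ 2 • (G * N * Gᴴ) - (2 * t) • (G * Gᴴ) := by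
  simp only [conjTranspose_neg, conjTranspose_smul, star_trivial, Matrix.neg_mul, Matrix.mul_neg,
    Matrix.smul_mul, Matrix.mul_smul]
  module

theorem eq_zero_of_forall_posSemidef_sq_smul_sub [Fintype l] {G : Matrix l m 𝕜}
    {P : Matrix l l 𝕜}
    (h : ∀ t : ℝ, 0 < t → (t ^ 2 • P - (2 * t) • (G * Gᴴ)).PosSemidef) : G = 0 := by
  set a := (G * Gᴴ).trace
  have ha : 0 ≤ a := (posSemidef_self_mul_conjTranspose G).trace_nonneg
  have hre : RCLike.re a ≤ 0 := by
    refine nonpos_of_forall_pos_le_mul (b := RCLike.re P.trace / 2) fun t ht => ?_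
    have := RCLike.nonneg_iff.mp (h t ht).trace_nonneg
    simp only [trace_sub, trace_smul, map_sub, RCLike.smul_re] at this
    nlinarith [this.1]
  have him : RCLike.im a = 0 := (RCLike.nonneg_iff.mp ha).2
  rw [← trace_mul_conjTranspose_self_eq_zero_iff]
  exact le_antisymm (RCLike.le_iff_re_im.mpr ⟨by simpa using hre, by simpa using him⟩) ha

end Matrix

theorem stmt11_general {n m p q : ℕ}
    (A : Matrix (Fin n) (Fin p) ℂ) (B : Matrix (Fin m) (Fin q) ℂ)
    (C : Matrix (Fin n) (Fin q) ℂ) (D : Matrix (Fin n) (Fin n) ℂ)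
    (M : Matrix (Fin q) (Fin q) ℂ)
    (hM : M.IsHermitian)
    (hBMB : (B * M * Bᴴ).PosSemidef)
    (hCA : LinearMap.range (C * M * Bᴴ).mulVecLin ≤ LinearMap.range A.mulVecLin) :
    ∀ Xhat : Matrix (Fin p) (Fin m) ℂ,
      (∀ X : Matrix (Fin p) (Fin m) ℂ,
          (((A * X * B + C) * M * (A * X * B + C)ᴴ + D) -
            ((A * Xhat * B + C) * M * (A * Xhat * B + C)ᴴ + D)).PosSemidef) ↔
        A * Xhat * (B * M * Bᴴ) + C * M * Bᴴ = 0 := by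
  intro Xhat
  set N := B * M * Bᴴ
  set G := A * Xhat * N + C * M * Bᴴ
  have hdiff (X : Matrix (Fin p) (Fin m) ℂ) :
      ((A * X * B + C) * M * (A * X * B + C)ᴴ + D) -
        ((A * Xhat * B + C) * M * (A * Xhat * B + C)ᴴ + D) =
      A * (X - Xhat) * N * (A * (X - Xhat))ᴴ + A * (X - Xhat) * Gᴴ + G * (A * (X - Xhat))ᴴ := by
    rw [add_sub_add_right_eq_sub]
    exact sandwich_sub_sandwich hM X Xhat
  constructor
  · intro hmin
    obtain ⟨H, hH⟩ := exists_mul_eq_of_range_le (A := A) (G := G) <| by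
      simpa only [G, Matrix.mul_assoc A] using range_mulVecLin_mul_add_le (Y := Xhat * N) hCA
    refine eq_zero_of_forall_posSemidef_sq_smul_sub (P := G * N * Gᴴ) fun t _ => ?_
    have := hmin (Xhat - t • H)
    rwa [hdiff, sub_sub_cancel_left, Matrix.mul_neg, Matrix.mul_smul, hH,
      neg_smul_sandwich] at this
  · intro hG X
    rw [hdiff, hG]
    simpa using hBMB.mul_mul_conjTranspose_same (A * (X - Xhat))

theorem stmt11 {n m p q : ℕ}
    (A : Matrix (Fin n) (Fin p) ℂ) (B : Matrix (Fin m) (Fin q) ℂ)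
    (C : Matrix (Fin n) (Fin q) ℂ) (D : Matrix (Fin n) (Fin n) ℂ)
    (M : Matrix (Fin q) (Fin q) ℂ)
    (hD : D.IsHermitian) (hM : M.IsHermitian) (hA : A ≠ 0)
    (hBMB : (B * M * Bᴴ).PosSemidef)
    (hCA : LinearMap.range (C * M * Bᴴ).mulVecLin ≤ LinearMap.range A.mulVecLin)
    (hBC : LinearMap.range (B * M * Cᴴ).mulVecLin ≤
      LinearMap.range (B * M * Bᴴ).mulVecLin) :
    ∀ Xhat : Matrix (Fin p) (Fin m) ℂ,
      (∀ X : Matrix (Fin p) (Fin m) ℂ,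
          (((A * X * B + C) * M * (A * X * B + C)ᴴ + D) -
            ((A * Xhat * B + C) * M * (A * Xhat * B + C)ᴴ + D)).PosSemidef) ↔
        A * Xhat * (B * M * Bᴴ) + C * M * Bᴴ = 0 :=
  stmt11_general A B C D M hM hBMB hCA
end

section
/- Let k ≥ 1 and for i = 1,…,k let A_i ∈ ℂ^{n×p_i} with A_i ≠ 0 and B_i ∈ ℂ^{m_i×q}; let C ∈ ℂ^{n×q}, Hermitian D ∈ ℂ^{n×n} and Hermitian M ∈ ℂ^{q×q} be given. Define φ(X₁,…,X_k) = (Σ_{i=1}^k A_iX_iB_i + C)M(Σ_{i=1}^k A_iX_iB_i + C)* + D and B = [B₁; … ; B_k]. Then there exist X̂₁,…,X̂_k such that φ(X₁,…,X_k) ⪰ φ(X̂₁,…,X̂_k) for all X₁,…,X_k if and only if BMB* ⪰ 0, ℛ(BMC*) ⊆ ℛ(BMB*), and the linear matrix equation Σ_{i=1}^k A_iY_iB_iMB* = −CMB* has a solution (Y₁,…,Y_k). Moreover, under the conditions BMB* ⪰ 0 and ℛ(BMC*) ⊆ ℛ(BMB*), a tuple (X̂₁,…,X̂_k) satisfies φ(X₁,…,X_k)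 ⪰ φ(X̂₁,…,X̂_k) for all X₁,…,X_k if and only if Σ_{i=1}^k A_iX̂_iB_iMB* = −CMB*. -/
/-!
Put `E = Σ Aᵢ X̂ᵢ Bᵢ + C` and `Δ = Σ Aᵢ Zᵢ Bᵢ` with `Zᵢ = Xᵢ - X̂ᵢ`. Then
`φ(X) - φ(X̂) = ΔME* + (ΔME*)* + ΔMΔ*`, and replacing `Δ` by `tΔ` for all `t ∈ ℂ` shows that `X̂`
is a minimizer iff `ΔME* = 0` and `ΔMΔ* ⪰ 0` for every such `Δ`. As
`Σ Aᵢ Zᵢ Bᵢ = [A₁Z₁ ⋯ A_kZ_k] B`, both conditions reduce to conditions on `B` once every `Aᵢ ≠ 0`: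
the first to `EMB* = 0`, the second to `BMB* ⪰ 0`, by taking a vector `u` with `u*Aᵢ ≠ 0` for
all `i` (a complex vector space is not a finite union of proper subspaces) and `Zᵢ` with `u*AᵢZᵢ`
any prescribed row. Finally `EMB* = 0` gives `BMC* = BMB* (-[A₁X̂₁ ⋯ A_kX̂_k]*)`, whence the range
inclusion.
-/

open Matrix
open scoped ComplexOrder

theorem Complex.eq_zero_of_forall_add_star_add_mul_star_nonneg {a b : ℂ}
    (h : ∀ t : ℂ, 0 ≤ t * a + star (t * a) + t * star t * b) : a = 0 := by
  by_contra ha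
  -- at `t = -s • star a` with `0 < s` small the expression has real part `(s² b.re - 2s) |a|² < 0`
  have hα : 0 < normSq a := normSq_pos.2 ha
  set s : ℝ := 1 / (|b.re| + 1)
  have hs : 0 < s := by positivity
  have hsb : s * b.re < 1 := by
    calc s * b.re ≤ s * |b.re| := mul_le_mul_of_nonneg_left (le_abs_self _) hs.le
      _ < 1 := by rw [div_mul_eq_mul_div, one_mul, div_lt_one (by positivity)]; linarith
  have key : (-s * star a) * a + star ((-s * star a) * a) + (-s * star a) * star (-s * star a) * b
      = ((-2 * s * normSq a : ℝ) : ℂ) + ((s ^ 2 * normSq a : ℝ) : ℂ) * b := by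
    simp only [star_mul', star_neg, Complex.star_def, Complex.conj_ofReal, Complex.conj_conj]
    push_cast
    linear_combination (-2 * (s : ℂ) + (s : ℂ) ^ 2 * b) * mul_conj a
  have hre := (Complex.le_def.1 (key ▸ h (-s * star a))).1
  simp only [zero_re, add_re, ofReal_re, re_ofReal_mul] at hre
  nlinarith [mul_pos hs hα]

namespace Matrix

theorem eq_zero_of_forall_star_dotProduct_mulVec_eq_zero {n : Type*} [Fintype n]
    {N : Matrix n n ℂ} (h : ∀ v, star v ⬝ᵥ N *ᵥ v = 0) : N = 0 := by
  classical
  suffices toEuclideanLin Nᴴ = 0 by simpa using this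
  refine (inner_map_self_eq_zero _).1 fun x => ?_
  rw [EuclideanSpace.inner_eq_star_dotProduct, toLpLin_apply, star_mulVec,
    conjTranspose_conjTranspose, dotProduct_comm, ← dotProduct_mulVec, h]

theorem star_dotProduct_conjTranspose_mulVec {n : Type*} [Fintype n] (X : Matrix n n ℂ)
    (v : n → ℂ) : star v ⬝ᵥ Xᴴ *ᵥ v = star (star v ⬝ᵥ X *ᵥ v) := by
  rw [mulVec_conjTranspose, star_dotProduct, star_star, dotProduct_mulVec]

theorem star_dotProduct_mul_mul_conjTranspose_mulVec {m n : Type*} [Fintype m] [Fintype n]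
    (K : Matrix m n ℂ) (M : Matrix n n ℂ) (x : m → ℂ) :
    star x ⬝ᵥ (K * M * Kᴴ) *ᵥ x = (star x ᵥ* K) ⬝ᵥ M *ᵥ star (star x ᵥ* K) := by
  rw [dotProduct_mulVec, ← vecMul_vecMul, ← vecMul_vecMul, ← dotProduct_mulVec,
    ← dotProduct_mulVec, mulVec_conjTranspose]

theorem IsHermitian.mul_mul_conjTranspose_eq_zero_comm {m n k : Type*} [Fintype n]
    {M : Matrix n n ℂ} (hM : M.IsHermitian) {E : Matrix m n ℂ} {F : Matrix k n ℂ} :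
    E * M * Fᴴ = 0 ↔ F * M * Eᴴ = 0 := by
  rw [← conjTranspose_eq_zero, conjTranspose_mul, conjTranspose_mul, conjTranspose_conjTranspose,
    hM.eq, Matrix.mul_assoc]

theorem range_mulVecLin_mul_le {R l m n : Type*} [CommSemiring R] [Fintype m] [Fintype n]
    (A : Matrix l m R) (B : Matrix m n R) :
    LinearMap.range (A * B).mulVecLin ≤ LinearMap.range A.mulVecLin := by
  rw [mulVecLin_mul]
  exact LinearMap.range_comp_le_range _ _

theorem eq_zero_of_forall_mul_mul_eq_zero {K l m n p : Type*} [Field K] [Fintype m]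
    [Fintype n] {A : Matrix l m K} (hA : A ≠ 0) {N : Matrix n p K}
    (h : ∀ Z : Matrix m n K, A * Z * N = 0) : N = 0 := by
  classical
  obtain ⟨r, s, hrs⟩ : ∃ r s, A r s ≠ 0 := by simpa [← Matrix.ext_iff] using hA
  ext t u
  have := congrFun₂ (h (single s t 1)) r u
  rw [Matrix.mul_assoc, mul_apply, Fintype.sum_eq_single s fun j hj => by
    rw [single_mul_apply_of_ne _ _ _ _ _ hj, mul_zero], single_mul_apply_same, one_mul,
    zero_apply] at this
  exact (mul_eq_zero.1 this).resolve_left hrs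

theorem exists_vecMul_eq {K m n : Type*} [Field K] [Fintype m] {w : m → K}
    (hw : w ≠ 0) (y : n → K) : ∃ Z : Matrix m n K, w ᵥ* Z = y := by
  classical
  obtain ⟨r, hr⟩ := Function.ne_iff.1 hw
  exact ⟨vecMulVec (Pi.single r (w r)⁻¹) y, by
    rw [vecMul_vecMulVec, dotProduct_single, mul_inv_cancel₀ hr, one_smul]⟩

theorem exists_forall_vecMul_ne_zero {ι K n : Type*} [Finite ι] [Field K] [Infinite K]
    [Fintype n] {p : ι → Type*} {A : ∀ i, Matrix n (p i) K}
    (hA : ∀ i, A i ≠ 0) : ∃ w : n → K, ∀ i, w ᵥ* A i ≠ 0 := by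
  classical
  have hker i : LinearMap.ker (A i).vecMulLinear ≠ ⊤ := by
    rw [Ne, LinearMap.ker_eq_top]
    refine fun h0 => hA i (Matrix.ext fun a b => ?_)
    simpa [single_vecMul] using congrFun (LinearMap.congr_fun h0 (Pi.single a 1)) b
  exact Submodule.exists_forall_notMem_of_forall_ne_top _ hker

section QuadraticMinimization

variable {m n : Type*} [Fintype n] {M : Matrix n n ℂ}

theorem IsHermitian.add_mul_mul_conjTranspose_add (hM : M.IsHermitian) (E Δ : Matrix m n ℂ) :
    (E + Δ) * M * (E + Δ)ᴴ = E * M * Eᴴ + (Δ * M * Eᴴ + (Δ * M * Eᴴ)ᴴ) + Δ * M * Δᴴ := by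
  simp only [conjTranspose_add, conjTranspose_mul, conjTranspose_conjTranspose, hM.eq,
    Matrix.add_mul, Matrix.mul_add, Matrix.mul_assoc]
  abel

variable [Fintype m]

theorem IsHermitian.mul_mul_conjTranspose_eq_zero_of_forall_posSemidef (hM : M.IsHermitian)
    {E Δ : Matrix m n ℂ}
    (h : ∀ t : ℂ, ((E + t • Δ) * M * (E + t • Δ)ᴴ - E * M * Eᴴ).PosSemidef) :
    Δ * M * Eᴴ = 0 := by
  refine eq_zero_of_forall_star_dotProduct_mulVec_eq_zero fun v => ?_
  refine Complex.eq_zero_of_forall_add_star_add_mul_star_nonneg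
    (b := star v ⬝ᵥ (Δ * M * Δᴴ) *ᵥ v) fun t => ?_
  have hdiff : (E + t • Δ) * M * (E + t • Δ)ᴴ - E * M * Eᴴ =
      t • (Δ * M * Eᴴ) + (t • (Δ * M * Eᴴ))ᴴ + (t * star t) • (Δ * M * Δᴴ) := by
    rw [hM.add_mul_mul_conjTranspose_add]
    simp only [conjTranspose_smul, Matrix.smul_mul, Matrix.mul_smul, smul_smul,
      mul_comm (star t) t]
    abel
  have := (h t).dotProduct_mulVec_nonneg v
  rwa [hdiff, add_mulVec, add_mulVec, dotProduct_add, dotProduct_add,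
    star_dotProduct_conjTranspose_mulVec, smul_mulVec, smul_mulVec, dotProduct_smul,
    dotProduct_smul, smul_eq_mul, smul_eq_mul] at this

theorem IsHermitian.forall_posSemidef_add_iff (hM : M.IsHermitian) {V : Type*} [AddCommGroup V]
    [Module ℂ V] (L : V →ₗ[ℂ] Matrix m n ℂ) (E : Matrix m n ℂ) :
    (∀ x, ((E + L x) * M * (E + L x)ᴴ - E * M * Eᴴ).PosSemidef) ↔
      (∀ x, L x * M * Eᴴ = 0) ∧ ∀ x, (L x * M * (L x)ᴴ).PosSemidef := by
  have expand : ∀ x, L x * M * Eᴴ = 0 →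
      (E + L x) * M * (E + L x)ᴴ - E * M * Eᴴ = L x * M * (L x)ᴴ := fun x hx => by
    rw [hM.add_mul_mul_conjTranspose_add, hx, conjTranspose_zero, add_zero, add_zero,
      add_sub_cancel_left]
  refine ⟨fun h => ?_, fun ⟨hcross, hpsd⟩ x => expand x (hcross x) ▸ hpsd x⟩
  have hcross x : L x * M * Eᴴ = 0 :=
    hM.mul_mul_conjTranspose_eq_zero_of_forall_posSemidef fun t => by simpa using h (t • x)
  exact ⟨hcross, fun x => expand x (hcross x) ▸ h x⟩

end QuadraticMinimization

section SigmaBlocks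

variable {ι α : Type*} {m : ι → Type*} {n q r : Type*}

def sigmaFromRows (B : ∀ i, Matrix (m i) q α) : Matrix (Σ i, m i) q α :=
  of fun j l => B j.1 j.2 l

def sigmaFromCols (F : ∀ i, Matrix n (m i) α) : Matrix n (Σ i, m i) α :=
  of fun l j => F j.1 l j.2

theorem sigmaFromRows_eq_zero_iff [Zero α] (B : ∀ i, Matrix (m i) q α) :
    sigmaFromRows B = 0 ↔ ∀ i, B i = 0 := by
  simp only [← Matrix.ext_iff, sigmaFromRows, of_apply, zero_apply, Sigma.forall]

variable [NonUnitalNonAssocSemiring α]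

theorem sigmaFromRows_mul [Fintype q] (B : ∀ i, Matrix (m i) q α) (N : Matrix q r α) :
    sigmaFromRows B * N = sigmaFromRows fun i => B i * N := rfl

theorem vecMul_sigmaFromCols [Fintype n] (x : n → α) (F : ∀ i, Matrix n (m i) α) :
    x ᵥ* sigmaFromCols F = fun j => (x ᵥ* F j.1) j.2 := rfl

theorem sigmaFromCols_mul_sigmaFromRows [Fintype ι] [∀ i, Fintype (m i)]
    (F : ∀ i, Matrix n (m i) α) (B : ∀ i, Matrix (m i) q α) :
    sigmaFromCols F * sigmaFromRows B = ∑ i, F i * B i := by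
  ext a b
  simp only [mul_apply, sigmaFromCols, sigmaFromRows, of_apply, Fintype.sum_sigma, sum_apply]

end SigmaBlocks

section SumMulMul

variable {ι K : Type*} [Fintype ι] [Field K] {p m : ι → Type*} [∀ i, Fintype (p i)]
  [∀ i, Fintype (m i)] {n q : Type*}

def sumMulMul (A : ∀ i, Matrix n (p i) K) (B : ∀ i, Matrix (m i) q K) :
    (∀ i, Matrix (p i) (m i) K) →ₗ[K] Matrix n q K where
  toFun X := ∑ i, A i * X i * B i
  map_add' X Y := by
    simp only [Pi.add_apply, Matrix.mul_add, Matrix.add_mul, Finset.sum_add_distrib]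
  map_smul' c X := by
    simp only [Pi.smul_apply, Matrix.mul_smul, Matrix.smul_mul, Finset.smul_sum, RingHom.id_apply]

variable (A : ∀ i, Matrix n (p i) K) (B : ∀ i, Matrix (m i) q K)

theorem sumMulMul_apply (X : ∀ i, Matrix (p i) (m i) K) :
    sumMulMul A B X = ∑ i, A i * X i * B i := rfl

theorem sumMulMul_eq_sigmaFromCols_mul_sigmaFromRows (X : ∀ i, Matrix (p i) (m i) K) :
    sumMulMul A B X = sigmaFromCols (fun i => A i * X i) * sigmaFromRows B :=
  (sigmaFromCols_mul_sigmaFromRows _ _).symm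

theorem sumMulMul_single [DecidableEq ι] (i : ι) (Z : Matrix (p i) (m i) K) :
    sumMulMul A B (Pi.single i Z) = A i * Z * B i := by
  rw [sumMulMul_apply, Fintype.sum_eq_single i fun j hj => by simp [Pi.single_eq_of_ne hj],
    Pi.single_eq_same]

variable {A}

theorem forall_sumMulMul_mul_eq_zero_iff [Fintype q] (hA : ∀ i, A i ≠ 0) {r : Type*}
    (N : Matrix q r K) :
    (∀ X, sumMulMul A B X * N = 0) ↔ sigmaFromRows B * N = 0 := by
  classical
  refine ⟨fun h => ?_, fun h X => ?_⟩
  · rw [sigmaFromRows_mul, sigmaFromRows_eq_zero_iff]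
    refine fun i => eq_zero_of_forall_mul_mul_eq_zero (hA i) fun Z => ?_
    simpa only [sumMulMul_single, Matrix.mul_assoc] using h (Pi.single i Z)
  · rw [sumMulMul_eq_sigmaFromCols_mul_sigmaFromRows, Matrix.mul_assoc, h, Matrix.mul_zero]

theorem sum_mul_mul_eq_neg_iff [Fintype q] {r s : Type*} [Fintype r] (C : Matrix n q K)
    (M : Matrix q r K) (N : Matrix r s K) (Y : ∀ i, Matrix (p i) (m i) K) :
    ∑ i, A i * Y i * (B i * M * N) = -(C * M * N) ↔ (sumMulMul A B Y + C) * M * N = 0 := by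
  simp only [Matrix.add_mul, add_eq_zero_iff_eq_neg, sumMulMul_apply, Matrix.sum_mul,
    Matrix.mul_assoc]

end SumMulMul

section Minimizers

variable {ι : Type*} [Fintype ι] {p m : ι → Type*} [∀ i, Fintype (p i)] [∀ i, Fintype (m i)]
  {n q : Type*} [Fintype n] [Fintype q] {A : ∀ i, Matrix n (p i) ℂ} (B : ∀ i, Matrix (m i) q ℂ)
  {M : Matrix q q ℂ}

theorem forall_posSemidef_sumMulMul_iff (hA : ∀ i, A i ≠ 0) (hM : M.IsHermitian) :
    (∀ X, (sumMulMul A B X * M * (sumMulMul A B X)ᴴ).PosSemidef) ↔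
      (sigmaFromRows B * M * (sigmaFromRows B)ᴴ).PosSemidef := by
  classical
  refine ⟨fun h => ?_, fun h X => ?_⟩
  · refine PosSemidef.of_dotProduct_mulVec_nonneg (isHermitian_mul_mul_conjTranspose _ hM)
      fun v => ?_
    obtain ⟨w, hw⟩ := exists_forall_vecMul_ne_zero hA
    choose X hX using fun i => exists_vecMul_eq (hw i) fun j => star v ⟨i, j⟩
    have hrow : w ᵥ* sumMulMul A B X = star v ᵥ* sigmaFromRows B := by
      rw [sumMulMul_eq_sigmaFromCols_mul_sigmaFromRows, ← vecMul_vecMul, vecMul_sigmaFromCols]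
      simp only [← vecMul_vecMul, hX]
    have := (h X).dotProduct_mulVec_nonneg (star w)
    rwa [star_dotProduct_mul_mul_conjTranspose_mulVec, star_star, hrow,
      ← star_dotProduct_mul_mul_conjTranspose_mulVec] at this
  · rw [sumMulMul_eq_sigmaFromCols_mul_sigmaFromRows, conjTranspose_mul]
    simpa only [Matrix.mul_assoc] using h.mul_mul_conjTranspose_same (sigmaFromCols _)

theorem forall_posSemidef_sub_iff (hA : ∀ i, A i ≠ 0) (hM : M.IsHermitian)
    (C : Matrix n q ℂ) (D : Matrix n n ℂ) (Xhat : ∀ i, Matrix (p i) (m i) ℂ) :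
    (∀ X, (((sumMulMul A B X + C) * M * (sumMulMul A B X + C)ᴴ + D) -
        ((sumMulMul A B Xhat + C) * M * (sumMulMul A B Xhat + C)ᴴ + D)).PosSemidef) ↔
      (sumMulMul A B Xhat + C) * M * (sigmaFromRows B)ᴴ = 0 ∧
        (sigmaFromRows B * M * (sigmaFromRows B)ᴴ).PosSemidef := by
  set L := sumMulMul A B
  set E := L Xhat + C
  have shift X : L X + C = E + L (X - Xhat) := by simp only [E, map_sub]; abel
  calc (∀ X, (((L X + C) * M * (L X + C)ᴴ + D) - (E * M * Eᴴ + D)).PosSemidef)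
      ↔ ∀ Z, ((E + L Z) * M * (E + L Z)ᴴ - E * M * Eᴴ).PosSemidef := by
        simp only [shift, add_sub_add_right_eq_sub]
        exact ⟨fun h Z => by simpa using h (Z + Xhat), fun h X => h (X - Xhat)⟩
    _ ↔ (∀ Z, L Z * M * Eᴴ = 0) ∧ ∀ Z, (L Z * M * (L Z)ᴴ).PosSemidef :=
        hM.forall_posSemidef_add_iff L E
    _ ↔ _ := by
        refine and_congr ?_ (forall_posSemidef_sumMulMul_iff B hA hM)
        simp only [Matrix.mul_assoc (L _)]
        rw [forall_sumMulMul_mul_eq_zero_iff B hA, ← Matrix.mul_assoc,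
          hM.mul_mul_conjTranspose_eq_zero_comm]

theorem range_mulVecLin_le_of_sumMulMul_add_mul_eq_zero (hM : M.IsHermitian)
    {C : Matrix n q ℂ} {X : ∀ i, Matrix (p i) (m i) ℂ}
    (h : (sumMulMul A B X + C) * M * (sigmaFromRows B)ᴴ = 0) :
    LinearMap.range (sigmaFromRows B * M * Cᴴ).mulVecLin ≤
      LinearMap.range (sigmaFromRows B * M * (sigmaFromRows B)ᴴ).mulVecLin := by
  rw [hM.mul_mul_conjTranspose_eq_zero_comm, conjTranspose_add, Matrix.mul_add,
    add_eq_zero_iff_neg_eq] at h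
  rw [← h, sumMulMul_eq_sigmaFromCols_mul_sigmaFromRows, conjTranspose_mul, ← Matrix.mul_assoc,
    ← Matrix.mul_neg]
  exact range_mulVecLin_mul_le _ _

end Minimizers

end Matrix

theorem stmt16_general {k n q : ℕ} {pdim mdim : Fin k → ℕ}
    (A : ∀ i : Fin k, Matrix (Fin n) (Fin (pdim i)) ℂ)
    (B : ∀ i : Fin k, Matrix (Fin (mdim i)) (Fin q) ℂ)
    (C : Matrix (Fin n) (Fin q) ℂ) (D : Matrix (Fin n) (Fin n) ℂ)
    (M : Matrix (Fin q) (Fin q) ℂ)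
    (hM : M.IsHermitian)
    (hA : ∀ i, A i ≠ 0)
    (Bbig : Matrix ((i : Fin k) × Fin (mdim i)) (Fin q) ℂ)
    (hBbig : ∀ (j : (i : Fin k) × Fin (mdim i)) (l : Fin q), Bbig j l = B j.1 j.2 l) :
    ((∃ Xhat : ∀ i : Fin k, Matrix (Fin (pdim i)) (Fin (mdim i)) ℂ,
        ∀ X : ∀ i : Fin k, Matrix (Fin (pdim i)) (Fin (mdim i)) ℂ,
          ((((∑ i, A i * X i * B i) + C) * M * ((∑ i, A i * X i * B i) + C)ᴴ + D) -
            (((∑ i, A i * Xhat i * B i) + C) * M *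
              ((∑ i, A i * Xhat i * B i) + C)ᴴ + D)).PosSemidef) ↔
      (Bbig * M * Bbigᴴ).PosSemidef ∧
      LinearMap.range (Bbig * M * Cᴴ).mulVecLin ≤
        LinearMap.range (Bbig * M * Bbigᴴ).mulVecLin ∧
      (∃ Y : ∀ i : Fin k, Matrix (Fin (pdim i)) (Fin (mdim i)) ℂ,
        ∑ i, A i * Y i * (B i * M * Bbigᴴ) = -(C * M * Bbigᴴ))) ∧
    ((Bbig * M * Bbigᴴ).PosSemidef →
      LinearMap.range (Bbig * M * Cᴴ).mulVecLin ≤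
        LinearMap.range (Bbig * M * Bbigᴴ).mulVecLin →
      ∀ Xhat : ∀ i : Fin k, Matrix (Fin (pdim i)) (Fin (mdim i)) ℂ,
        (∀ X : ∀ i : Fin k, Matrix (Fin (pdim i)) (Fin (mdim i)) ℂ,
            ((((∑ i, A i * X i * B i) + C) * M * ((∑ i, A i * X i * B i) + C)ᴴ + D) -
              (((∑ i, A i * Xhat i * B i) + C) * M *
                ((∑ i, A i * Xhat i * B i) + C)ᴴ + D)).PosSemidef) ↔
          ∑ i, A i * Xhat i * (B i * M * Bbigᴴ) = -(C * M * Bbigᴴ)) := by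
  obtain rfl : Bbig = sigmaFromRows B := Matrix.ext hBbig
  have minimizer_iff := forall_posSemidef_sub_iff B hA hM C D
  have equation_iff := sum_mul_mul_eq_neg_iff (A := A) B C M (sigmaFromRows B)ᴴ
  refine ⟨⟨fun ⟨Xhat, hXhat⟩ => ?_, fun ⟨hpsd, _, Y, hY⟩ => ?_⟩, fun hpsd _ Xhat => ?_⟩
  · obtain ⟨horth, hpsd⟩ := (minimizer_iff Xhat).1 hXhat
    exact ⟨hpsd, range_mulVecLin_le_of_sumMulMul_add_mul_eq_zero B hM horth, Xhat,
      (equation_iff Xhat).2 horth⟩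
  · exact ⟨Y, (minimizer_iff Y).2 ⟨(equation_iff Y).1 hY, hpsd⟩⟩
  · exact (minimizer_iff Xhat).trans ((and_iff_left hpsd).trans (equation_iff Xhat).symm)

theorem stmt16 {k n q : ℕ} (hk : 1 ≤ k) {pdim mdim : Fin k → ℕ}
    (A : ∀ i : Fin k, Matrix (Fin n) (Fin (pdim i)) ℂ)
    (B : ∀ i : Fin k, Matrix (Fin (mdim i)) (Fin q) ℂ)
    (C : Matrix (Fin n) (Fin q) ℂ) (D : Matrix (Fin n) (Fin n) ℂ)
    (M : Matrix (Fin q) (Fin q) ℂ)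
    (hD : D.IsHermitian) (hM : M.IsHermitian)
    (hA : ∀ i, A i ≠ 0)
    (Bbig : Matrix ((i : Fin k) × Fin (mdim i)) (Fin q) ℂ)
    (hBbig : ∀ (j : (i : Fin k) × Fin (mdim i)) (l : Fin q), Bbig j l = B j.1 j.2 l) :
    ((∃ Xhat : ∀ i : Fin k, Matrix (Fin (pdim i)) (Fin (mdim i)) ℂ,
        ∀ X : ∀ i : Fin k, Matrix (Fin (pdim i)) (Fin (mdim i)) ℂ,
          ((((∑ i, A i * X i * B i) + C) * M * ((∑ i, A i * X i * B i) + C)ᴴ + D) -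
            (((∑ i, A i * Xhat i * B i) + C) * M *
              ((∑ i, A i * Xhat i * B i) + C)ᴴ + D)).PosSemidef) ↔
      (Bbig * M * Bbigᴴ).PosSemidef ∧
      LinearMap.range (Bbig * M * Cᴴ).mulVecLin ≤
        LinearMap.range (Bbig * M * Bbigᴴ).mulVecLin ∧
      (∃ Y : ∀ i : Fin k, Matrix (Fin (pdim i)) (Fin (mdim i)) ℂ,
        ∑ i, A i * Y i * (B i * M * Bbigᴴ) = -(C * M * Bbigᴴ))) ∧
    ((Bbig * M * Bbigᴴ).PosSemidef →
      LinearMap.range (Bbig * M * Cᴴ).mulVecLin ≤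
        LinearMap.range (Bbig * M * Bbigᴴ).mulVecLin →
      ∀ Xhat : ∀ i : Fin k, Matrix (Fin (pdim i)) (Fin (mdim i)) ℂ,
        (∀ X : ∀ i : Fin k, Matrix (Fin (pdim i)) (Fin (mdim i)) ℂ,
            ((((∑ i, A i * X i * B i) + C) * M * ((∑ i, A i * X i * B i) + C)ᴴ + D) -
              (((∑ i, A i * Xhat i * B i) + C) * M *
                ((∑ i, A i * Xhat i * B i) + C)ᴴ + D)).PosSemidef) ↔
          ∑ i, A i * Xhat i * (B i * M * Bbigᴴ) = -(C * M * Bbigᴴ)) :=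
  stmt16_general A B C D M hM hA Bbig hBbig
end
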